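/- Let P₁,...,P_M be orthogonal projection matrices, S(A) = (1/M)Σⱼ PⱼAPⱼ, P̄ = (1/M)Σⱼ Pⱼ with spectral norm λ := ‖P̄‖₂, and f_m = tr(S^m(I - P̄)). Then f_m ≤ λ^{m-1} f₁ for every m ≥ 1. -/

import Mathlib

open Matrix Finset
open scoped MatrixOrder RealInnerProductSpace

/-! `P̄` is an average of projections, so `P̄ ⪯ 1`, and `S` is an average of congruences,
so every `Aₖ = S^k (1 - P̄)` is positive semidefinite. By cyclicity of the trace and `Pⱼ² = Pⱼ`,
`tr (S A) = tr (P̄ A)`, and `P̄ ⪯ λ • 1` gives `tr (P̄ A) ≤ λ tr A` for `A ⪰ 0`. Hence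
`f (k + 1) ≤ λ f k`, which iterates to the geometric bound. -/

section OrderedAlgebra

variable {R ι : Type*} [Ring R] [PartialOrder R] [Module ℝ R] [PosSMulMono ℝ R] [Fintype ι]

theorem one_div_card_smul_sum_le_one [IsOrderedAddMonoid R] [ZeroLEOneClass R] {a : ι → R}
    (ha : ∀ j, a j ≤ 1) : (1 / Fintype.card ι : ℝ) • ∑ j, a j ≤ 1 := by
  rcases isEmpty_or_nonempty ι with _ | _
  · simp
  have hcard : (Fintype.card ι : ℝ) ≠ 0 := by positivity
  calc (1 / Fintype.card ι : ℝ) • ∑ j, a j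
      ≤ (1 / Fintype.card ι : ℝ) • (Fintype.card ι • 1 : R) := by
        gcongr
        exact sum_le_card_nsmul _ _ _ fun j _ => ha j
    _ = 1 := by rw [← Nat.cast_smul_eq_nsmul ℝ, smul_smul, one_div_mul_cancel hcard, one_smul]

theorem smul_sum_conj_nonneg [StarRing R] [StarOrderedRing R] {c : ℝ} (hc : 0 ≤ c)
    {p : ι → R} (hp : ∀ j, IsSelfAdjoint (p j)) {a : R} (ha : 0 ≤ a) :
    0 ≤ c • ∑ j, p j * a * p j :=
  smul_nonneg hc <| sum_nonneg fun j _ => by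
    simpa only [(hp j).star_eq] using star_left_conjugate_nonneg ha (p j)

end OrderedAlgebra

namespace Matrix

variable {n : Type*} [Fintype n]

theorem trace_sum_mul_mul_of_isIdempotentElem {ι R : Type*} [Fintype ι] [CommSemiring R]
    {P : ι → Matrix n n R} (hP : ∀ j, IsIdempotentElem (P j)) (A : Matrix n n R) :
    trace (∑ j, P j * A * P j) = trace ((∑ j, P j) * A) := by
  simp only [trace_sum, sum_mul]
  exact sum_congr rfl fun j _ => by rw [trace_mul_cycle, hP j]

theorem isStarProjection_of_transpose_eq {P : Matrix n n ℝ} (hsym : Pᵀ = P) (hidem : P * P = P) :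
    IsStarProjection P :=
  ⟨hidem, by rwa [IsSelfAdjoint, star_eq_conjTranspose, conjTranspose_eq_transpose_of_trivial]⟩

variable [DecidableEq n]

theorem trace_mul_nonneg {A B : Matrix n n ℝ} (hA : 0 ≤ A) (hB : 0 ≤ B) :
    0 ≤ (A * B).trace := by
  obtain ⟨C, rfl⟩ := CStarAlgebra.nonneg_iff_eq_star_mul_self.mp hA
  rw [Matrix.mul_assoc, trace_mul_comm]
  exact (nonneg_iff_posSemidef.mp (star_right_conjugate_nonneg hB C)).trace_nonneg

theorem trace_mul_mono_left {A B C : Matrix n n ℝ} (hAB : A ≤ B) (hC : 0 ≤ C) :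
    (A * C).trace ≤ (B * C).trace := by
  have := trace_mul_nonneg (sub_nonneg.mpr hAB) hC
  rwa [Matrix.sub_mul, trace_sub, sub_nonneg] at this

theorem dotProduct_mulVec_le_opNorm_mul (A : Matrix n n ℝ) (x : n → ℝ) :
    x ⬝ᵥ A *ᵥ x ≤ ‖toEuclideanCLM (𝕜 := ℝ) A‖ * (x ⬝ᵥ x) := by
  set T := toEuclideanCLM (𝕜 := ℝ) A
  set y := WithLp.toLp 2 x
  have hy : ‖y‖ ^ 2 = x ⬝ᵥ x := by
    rw [← real_inner_self_eq_norm_sq, EuclideanSpace.inner_toLp_toLp, dotProduct_comm]; rfl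
  calc x ⬝ᵥ A *ᵥ x = ⟪y, T y⟫ := (inner_toEuclideanCLM A y y).symm
    _ ≤ ‖y‖ * ‖T y‖ := real_inner_le_norm _ _
    _ ≤ ‖y‖ * (‖T‖ * ‖y‖) := by gcongr; exact T.le_opNorm y
    _ = ‖T‖ * (x ⬝ᵥ x) := by rw [← hy]; ring

theorem IsHermitian.le_opNorm_smul_one {A : Matrix n n ℝ} (hA : A.IsHermitian) :
    A ≤ ‖toEuclideanCLM (𝕜 := ℝ) A‖ • 1 := by
  refine le_iff.mpr (.of_dotProduct_mulVec_nonneg ((isHermitian_one.smul (.all _)).sub hA)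
    fun x => ?_)
  have := A.dotProduct_mulVec_le_opNorm_mul x
  simp only [star_trivial, sub_mulVec, smul_mulVec, one_mulVec, dotProduct_sub, dotProduct_smul,
    smul_eq_mul]
  linarith

theorem IsHermitian.trace_mul_le_opNorm_mul_trace {B C : Matrix n n ℝ} (hB : B.IsHermitian)
    (hC : 0 ≤ C) : (B * C).trace ≤ ‖toEuclideanCLM (𝕜 := ℝ) B‖ * C.trace := by
  simpa only [Matrix.smul_mul, Matrix.one_mul, trace_smul, smul_eq_mul] using
    trace_mul_mono_left hB.le_opNorm_smul_one hC

end Matrix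

/-- Exponential decay from spectral diffuseness: with `S(A) = (1/M) Σⱼ Pⱼ A Pⱼ`,
`P̄ = (1/M) Σⱼ Pⱼ`, `λ = ‖P̄‖₂` the spectral (ℓ²-operator) norm of `P̄`, and
`f_m = tr(S^m(I - P̄))`, one has `f_m ≤ λ^{m-1} f₁` for every `m ≥ 1`. -/
theorem chain_exponential_decay {d M : ℕ} (P : Fin M → Matrix (Fin d) (Fin d) ℝ)
    (hPsym : ∀ j, (P j)ᵀ = P j) (hPidem : ∀ j, P j * P j = P j)
    (S : Matrix (Fin d) (Fin d) ℝ → Matrix (Fin d) (Fin d) ℝ)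
    (hS : ∀ A, S A = (1 / (M : ℝ)) • ∑ j, P j * A * P j)
    (Pbar : Matrix (Fin d) (Fin d) ℝ)
    (hPbar : Pbar = (1 / (M : ℝ)) • ∑ j, P j)
    (lam : ℝ) (hlam : lam = ‖Matrix.toEuclideanCLM (𝕜 := ℝ) Pbar‖)
    (f : ℕ → ℝ) (hf : ∀ m, f m = Matrix.trace (S^[m] (1 - Pbar)))
    (m : ℕ) (hm : 1 ≤ m) :
    f m ≤ lam ^ (m - 1) * f 1 := by
  have hP : ∀ j, IsStarProjection (P j) := fun j =>
    isStarProjection_of_transpose_eq (hPsym j) (hPidem j)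
  have hPbar_herm : Pbar.IsHermitian := hPbar ▸
    (IsSelfAdjoint.all _).smul (isSelfAdjoint_sum _ fun j _ => (hP j).isSelfAdjoint)
  have hPbar_le : Pbar ≤ 1 := by
    simpa only [hPbar, Fintype.card_fin] using one_div_card_smul_sum_le_one fun j => (hP j).le_one
  have horbit : ∀ k, 0 ≤ S^[k] (1 - Pbar) := fun k =>
    Set.MapsTo.iterate (f := S) (s := {A | 0 ≤ A})
      (fun A hA => (hS A).symm ▸ smul_sum_conj_nonneg (by positivity)
        (fun j => (hP j).isSelfAdjoint) hA) k (sub_nonneg.mpr hPbar_le)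
  have hstep : ∀ k, f (k + 1) ≤ lam * f k := fun k => by
    rw [hf, hf, Function.iterate_succ_apply', hS, trace_smul,
      trace_sum_mul_mul_of_isIdempotentElem (fun j => (hP j).isIdempotentElem), ← trace_smul,
      ← Matrix.smul_mul, ← hPbar, hlam]
    exact hPbar_herm.trace_mul_le_opNorm_mul_trace (horbit k)
  obtain ⟨k, rfl⟩ := Nat.exists_eq_add_of_le' hm
  simpa using le_geom (u := fun i => f (i + 1)) (hlam ▸ norm_nonneg _) k fun i _ => hstep (i + 1)
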